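/- arXiv:1310.1969 — 3 statements merged into one kernel-verified Lean document; each statement's English description precedes it below -/
import Mathlib

section
/- For a nonincreasing sequence λ₁ ≥ λ₂ ≥ … ≥ λ_p ≥ 0 with λ₁ > 0, the function J_λ(b) = Σᵢ λᵢ |b|₍ᵢ₎, where |b|₍₁₎ ≥ … ≥ |b|₍p₎ are the magnitudes of the entries of b sorted in decreasing order, is a norm on ℝ^p. -/
/-- The `i`-th largest absolute value among the coordinates of `b`. -/
noncomputable def sortedAbs {p : ℕ} (b : Fin p → ℝ) (i : Fin p) : ℝ :=
  |b (Tuple.sort (fun j => |b j|) i.rev)|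

/-- The sorted ℓ₁ norm `J_λ(b) = ∑ᵢ λᵢ |b|₍ᵢ₎`. -/
noncomputable def sortedL1 {p : ℕ} (lam b : Fin p → ℝ) : ℝ :=
  ∑ i, lam i * sortedAbs b i

/-!
Write `|b|₍ᵢ₎ = |b (σ_b i)|` for the permutation `σ_b` sorting `|b|` decreasingly. Since `λ` is
antitone, the rearrangement inequality gives `∑ᵢ λᵢ |b (σ i)| ≤ J_λ(b)` for every permutation `σ`,
i.e. `J_λ` is the maximum over `σ` of these weighted ℓ₁ seminorms, and a maximum of seminorms is
subadditive. Definiteness holds because `|b|₍₁₎ = maxⱼ |b j|` and `λ₁ |b|₍₁₎ ≤ J_λ(b)`.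
-/

open Finset

noncomputable def sortedAbsPerm {p : ℕ} (b : Fin p → ℝ) : Equiv.Perm (Fin p) :=
  Fin.revPerm.trans (Tuple.sort fun j => |b j|)

section SortedAbs

variable {p : ℕ} (b : Fin p → ℝ)

lemma sortedAbs_eq_abs_sortedAbsPerm (i : Fin p) : sortedAbs b i = |b (sortedAbsPerm b i)| :=
  rfl

lemma sortedAbs_sortedAbsPerm_symm (j : Fin p) :
    sortedAbs b ((sortedAbsPerm b).symm j) = |b j| := by
  rw [sortedAbs_eq_abs_sortedAbsPerm, Equiv.apply_symm_apply]

lemma antitone_sortedAbs : Antitone (sortedAbs b) :=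
  fun _ _ hij => Tuple.monotone_sort (fun j => |b j|) (Fin.rev_le_rev.mpr hij)

lemma abs_le_sortedAbs_zero (hp : 0 < p) (j : Fin p) : |b j| ≤ sortedAbs b ⟨0, hp⟩ := by
  rw [← sortedAbs_sortedAbsPerm_symm b j]
  exact antitone_sortedAbs b (Fin.mk_le_of_le_val (Nat.zero_le _))

lemma sortedAbs_smul (c : ℝ) (i : Fin p) : sortedAbs (c • b) i = |c| * sortedAbs b i := by
  set σ := Tuple.sort fun j => |b j|
  -- `σ` also sorts `|c • b| = |c| * |b|`, and any sorting permutation yields the same sorted tuple.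
  have hsorted : Monotone ((fun j => |(c • b) j|) ∘ σ) := by
    simpa only [Function.comp_def, Pi.smul_apply, smul_eq_mul, abs_mul]
      using (Tuple.monotone_sort fun j => |b j|).const_mul (abs_nonneg c)
  have hsame := congrFun (Tuple.comp_sort_eq_comp_iff_monotone.mpr hsorted) i.rev
  simp only [Function.comp_apply] at hsame
  rw [sortedAbs, sortedAbs, ← hsame, Pi.smul_apply, smul_eq_mul, abs_mul]

end SortedAbs

section SortedL1

variable {p : ℕ} (lam : Fin p → ℝ)

lemma sum_mul_abs_comp_perm_le_sortedL1 (hmono : Antitone lam) (b : Fin p → ℝ)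
    (σ : Equiv.Perm (Fin p)) : ∑ i, lam i * |b (σ i)| ≤ sortedL1 lam b := by
  have hrearr := (hmono.monovary (antitone_sortedAbs b)).sum_smul_comp_perm_le_sum_smul
    (σ := σ.trans (sortedAbsPerm b).symm)
  simp only [smul_eq_mul, Equiv.trans_apply, sortedAbs_sortedAbsPerm_symm] at hrearr
  exact hrearr

lemma sortedL1_nonneg (hnonneg : ∀ i, 0 ≤ lam i) (b : Fin p → ℝ) : 0 ≤ sortedL1 lam b :=
  sum_nonneg fun i _ => mul_nonneg (hnonneg i) (abs_nonneg _)

lemma sortedL1_eq_zero_iff (hp : 0 < p) (hnonneg : ∀ i, 0 ≤ lam i) (hpos : 0 < lam ⟨0, hp⟩)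
    (b : Fin p → ℝ) : sortedL1 lam b = 0 ↔ b = 0 := by
  constructor
  · intro hzero
    have hterms := (sum_eq_zero_iff_of_nonneg fun i _ =>
      mul_nonneg (hnonneg i) (abs_nonneg _)).mp hzero ⟨0, hp⟩ (mem_univ _)
    have hmax : sortedAbs b ⟨0, hp⟩ = 0 := (mul_eq_zero.mp hterms).resolve_left hpos.ne'
    funext j
    exact abs_nonpos_iff.mp (hmax ▸ abs_le_sortedAbs_zero b hp j)
  · rintro rfl
    simp [sortedL1, sortedAbs]

lemma sortedL1_smul (c : ℝ) (b : Fin p → ℝ) : sortedL1 lam (c • b) = |c| * sortedL1 lam b := by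
  simp only [sortedL1, sortedAbs_smul, mul_sum, mul_left_comm]

lemma sortedL1_add_le (hmono : Antitone lam) (hnonneg : ∀ i, 0 ≤ lam i) (a b : Fin p → ℝ) :
    sortedL1 lam (a + b) ≤ sortedL1 lam a + sortedL1 lam b := by
  set τ := sortedAbsPerm (a + b)
  calc sortedL1 lam (a + b) = ∑ i, lam i * |a (τ i) + b (τ i)| := rfl
    _ ≤ ∑ i, (lam i * |a (τ i)| + lam i * |b (τ i)|) := by
        gcongr with i
        rw [← mul_add]
        exact mul_le_mul_of_nonneg_left (abs_add_le _ _) (hnonneg i)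
    _ = ∑ i, lam i * |a (τ i)| + ∑ i, lam i * |b (τ i)| := sum_add_distrib
    _ ≤ sortedL1 lam a + sortedL1 lam b :=
        add_le_add (sum_mul_abs_comp_perm_le_sortedL1 lam hmono a τ)
          (sum_mul_abs_comp_perm_le_sortedL1 lam hmono b τ)

end SortedL1

/-- the sorted ℓ₁ norm is a norm on ℝ^p. -/
theorem sortedL1_is_norm {p : ℕ} (hp : 0 < p) (lam : Fin p → ℝ)
    (hmono : Antitone lam) (hnonneg : ∀ i, 0 ≤ lam i)
    (hpos : 0 < lam ⟨0, hp⟩) :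
    (∀ b : Fin p → ℝ, 0 ≤ sortedL1 lam b) ∧
    (∀ b : Fin p → ℝ, sortedL1 lam b = 0 ↔ b = 0) ∧
    (∀ (c : ℝ) (b : Fin p → ℝ), sortedL1 lam (c • b) = |c| * sortedL1 lam b) ∧
    (∀ a b : Fin p → ℝ, sortedL1 lam (a + b) ≤ sortedL1 lam a + sortedL1 lam b) :=
  ⟨sortedL1_nonneg lam hnonneg, sortedL1_eq_zero_iff lam hp hnonneg hpos, sortedL1_smul lam,
    sortedL1_add_le lam hmono hnonneg⟩
end

section
/- For any nonincreasing nonnegative λ and any b ∈ ℝ^p, the sorted ℓ₁ norm admits the dual characterization J_λ(b) = sup { ⟨w, b⟩ : w ∈ C_λ }, where C_λ = { w ∈ ℝ^p : Σ_{j ≤ i} |w|₍ⱼ₎ ≤ Σ_{j ≤ i} λⱼ for all i = 1,…,p }. -/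
open Finset

section
variable {M : Type*} [AddCommGroup M] [LinearOrder M] [IsOrderedAddMonoid M]

theorem Finset.sum_le_sum_of_card_eq_of_sdiff {α : Type*} [DecidableEq α] {f : α → M}
    {s t : Finset α} (hst : #s = #t) {c : M} (hs : ∀ x ∈ s \ t, f x ≤ c)
    (ht : ∀ x ∈ t \ s, c ≤ f x) : ∑ x ∈ s, f x ≤ ∑ x ∈ t, f x := by
  rw [← sub_nonpos, ← sum_sdiff_sub_sum_sdiff, sub_nonpos]
  calc ∑ x ∈ s \ t, f x ≤ #(s \ t) • c := sum_le_card_nsmul _ _ _ hs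
    _ = #(t \ s) • c := by rw [card_sdiff_comm hst]
    _ ≤ ∑ x ∈ t \ s, f x := card_nsmul_le_sum _ _ _ ht

theorem Finset.sum_le_sum_Iic_of_antitone {α : Type*} [LinearOrder α] [LocallyFiniteOrderBot α]
    {f : α → M} (hf : Antitone f) {s : Finset α} {i : α} (hs : #s = #(Iic i)) :
    ∑ x ∈ s, f x ≤ ∑ x ∈ Iic i, f x :=
  sum_le_sum_of_card_eq_of_sdiff hs (c := f i)
    (fun x hx => hf (le_of_lt (by simpa using (mem_sdiff.1 hx).2)))
    (fun x hx => hf (mem_Iic.1 (mem_sdiff.1 hx).1))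

variable {R : Type*} [CommRing R] [LinearOrder R] [IsStrictOrderedRing R]

theorem Finset.sum_mul_nonpos_of_sum_filter_le_nonpos {α : Type*} [LinearOrder α] (s : Finset α)
    (d c : α → R) (hc : AntitoneOn c s) (hc₀ : ∀ i ∈ s, 0 ≤ c i)
    (hd : ∀ i ∈ s, ∑ j ∈ s with j ≤ i, d j ≤ 0) : ∑ i ∈ s, d i * c i ≤ 0 := by
  induction s using Finset.induction_on_max generalizing c with
  | empty => simp
  | insert a s ha ih =>
    have ha' : a ∉ s := fun h => lt_irrefl a (ha a h)
    have hca : ∀ x ∈ s, c a ≤ c x := fun x hx =>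
      hc (mem_insert_of_mem hx) (mem_insert_self a s) (ha x hx).le
    have hfilter : ∀ i ∈ s, ({j ∈ insert a s | j ≤ i} : Finset α) = {j ∈ s | j ≤ i} := by
      intro i hi
      rw [filter_insert, if_neg (not_le.2 (ha i hi))]
    -- lowering every weight by the smallest one, `c a`, keeps them antitone and nonnegative on `s`
    have hs : ∑ i ∈ s, d i * (c i - c a) ≤ 0 :=
      ih (fun i => c i - c a)
        (fun x hx y hy hxy =>
          sub_le_sub_right (hc (mem_insert_of_mem hx) (mem_insert_of_mem hy) hxy) _)
        (fun i hi => sub_nonneg.2 (hca i hi))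
        (fun i hi => by simpa [hfilter i hi] using hd i (mem_insert_of_mem hi))
    have htotal : ∑ j ∈ insert a s, d j ≤ 0 := by
      have := hd a (mem_insert_self a s)
      rwa [filter_true_of_mem fun j hj => ?_] at this
      rcases mem_insert.1 hj with rfl | hj
      · exact le_rfl
      · exact (ha j hj).le
    have hdecomp : ∑ i ∈ insert a s, d i * c i
        = ∑ i ∈ s, d i * (c i - c a) + (∑ j ∈ insert a s, d j) * c a := by
      simp only [sum_insert ha', mul_sub, sum_sub_distrib, add_mul, sum_mul]
      ring
    rw [hdecomp]
    exact add_nonpos hs (mul_nonpos_of_nonpos_of_nonneg htotal (hc₀ a (mem_insert_self a s)))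

theorem Finset.sum_mul_le_sum_mul_of_sum_Iic_le {α : Type*} [Fintype α] [LinearOrder α]
    [LocallyFiniteOrderBot α] {a b c : α → R} (hc : Antitone c) (hc₀ : 0 ≤ c)
    (hab : ∀ i, ∑ j ∈ Iic i, a j ≤ ∑ j ∈ Iic i, b j) :
    ∑ i, a i * c i ≤ ∑ i, b i * c i := by
  have := sum_mul_nonpos_of_sum_filter_le_nonpos univ (a - b) c (hc.antitoneOn _) (fun i _ => hc₀ i)
    fun i _ => by simpa [filter_ge_eq_Iic, sum_sub_distrib] using hab i
  simpa [sub_mul, sum_sub_distrib] using this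

end

namespace SortedL1

variable {p : ℕ}

noncomputable def sortingPerm (b : Fin p → ℝ) : Equiv.Perm (Fin p) :=
  Fin.revPerm.trans (Tuple.sort fun j => |b j|)

theorem sortedAbs_eq (b : Fin p → ℝ) (i : Fin p) : sortedAbs b i = |b (sortingPerm b i)| := rfl

theorem antitone_sortedAbs (b : Fin p → ℝ) : Antitone (sortedAbs b) := fun _ _ hij =>
  Tuple.monotone_sort (fun j => |b j|) (Fin.rev_le_rev.2 hij)

theorem sum_abs_mul_abs_le_sum_sortedAbs_mul (w b : Fin p → ℝ) :
    ∑ i, |w i| * |b i| ≤ ∑ i, sortedAbs w i * sortedAbs b i := by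
  calc ∑ i, |w i| * |b i|
      = ∑ i, sortedAbs w ((sortingPerm b).trans (sortingPerm w).symm i) * sortedAbs b i := by
        rw [← Equiv.sum_comp (sortingPerm b)]
        simp [sortedAbs_eq]
    _ ≤ ∑ i, sortedAbs w i * sortedAbs b i :=
        ((antitone_sortedAbs w).monovary (antitone_sortedAbs b)).sum_comp_perm_mul_le_sum_mul

theorem sum_Iic_sortedAbs_le {w lam : Fin p → ℝ} (hlam : Antitone lam) (τ : Equiv.Perm (Fin p))
    (hw : ∀ j, |w (τ j)| ≤ lam j) (i : Fin p) :
    ∑ j ∈ Iic i, sortedAbs w j ≤ ∑ j ∈ Iic i, lam j := by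
  set s := (Iic i).map ((sortingPerm w).trans τ.symm).toEmbedding
  calc ∑ j ∈ Iic i, sortedAbs w j = ∑ j ∈ s, |w (τ j)| := by simp [s, sortedAbs_eq]
    _ ≤ ∑ j ∈ s, lam j := sum_le_sum fun j _ => hw j
    _ ≤ ∑ j ∈ Iic i, lam j := sum_le_sum_Iic_of_antitone hlam (card_map _)

theorem sum_mul_le_sortedL1 {lam w : Fin p → ℝ}
    (hw : ∀ i, ∑ j ∈ Iic i, sortedAbs w j ≤ ∑ j ∈ Iic i, lam j) (b : Fin p → ℝ) :
    ∑ i, w i * b i ≤ sortedL1 lam b :=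
  calc ∑ i, w i * b i ≤ ∑ i, |w i| * |b i| :=
        sum_le_sum fun _ _ => (le_abs_self _).trans (abs_mul _ _).le
    _ ≤ ∑ i, sortedAbs w i * sortedAbs b i := sum_abs_mul_abs_le_sum_sortedAbs_mul w b
    _ ≤ sortedL1 lam b :=
        sum_mul_le_sum_mul_of_sum_Iic_le (antitone_sortedAbs b) (fun _ => abs_nonneg _) hw

theorem exists_sum_mul_eq_sortedL1 {lam : Fin p → ℝ} (hlam : Antitone lam) (hlam₀ : 0 ≤ lam)
    (b : Fin p → ℝ) : ∃ w : Fin p → ℝ,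
      (∀ i, ∑ j ∈ Iic i, sortedAbs w j ≤ ∑ j ∈ Iic i, lam j) ∧ ∑ i, w i * b i = sortedL1 lam b := by
  set σ := sortingPerm b
  refine ⟨fun j => SignType.sign (b j) * lam (σ.symm j),
    sum_Iic_sortedAbs_le hlam σ fun j => ?_, ?_⟩
  · rw [Equiv.symm_apply_apply, abs_mul, abs_of_nonneg (hlam₀ j)]
    exact mul_le_of_le_one_left (hlam₀ j) (by cases SignType.sign (b (σ j)) <;> simp)
  · rw [← Equiv.sum_comp σ]
    refine sum_congr rfl fun j _ => ?_
    simp only [Equiv.symm_apply_apply, sortedAbs_eq, σ]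
    rw [mul_right_comm, sign_mul_self, mul_comm]

end SortedL1

/-- dual characterization of the sorted ℓ₁ norm. -/
theorem sortedL1_dual {p : ℕ} (lam : Fin p → ℝ)
    (hmono : Antitone lam) (hnonneg : ∀ i, 0 ≤ lam i) (b : Fin p → ℝ) :
    sortedL1 lam b =
      sSup {x : ℝ | ∃ w : Fin p → ℝ,
        (∀ i : Fin p, ∑ j ∈ Finset.Iic i, sortedAbs w j ≤ ∑ j ∈ Finset.Iic i, lam j) ∧
        x = ∑ i, w i * b i} := by
  obtain ⟨w, hw, hwb⟩ := SortedL1.exists_sum_mul_eq_sortedL1 hmono hnonneg b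
  refine (IsGreatest.csSup_eq ?_).symm
  refine ⟨⟨w, hw, hwb.symm⟩, ?_⟩
  rintro x ⟨v, hv, rfl⟩
  exact SortedL1.sum_mul_le_sortedL1 hv b
end

section
/- Let ỹ ∈ ℝ^p with |ỹ₁| ≥ |ỹ₂| ≥ … ≥ |ỹ_p| and λ₁ ≥ … ≥ λ_p > 0 nonincreasing. Let β̂ minimize ½‖ỹ − b‖₂² + Σᵢ λᵢ |b|₍ᵢ₎, and let i⋆ = #{i : β̂ᵢ ≠ 0}. Define i_SU as the largest index i with |ỹ|₍ᵢ₎ > λᵢ (0 if none), and i_SD + 1 as the smallest index i with |ỹ|₍ᵢ₎ ≤ λᵢ (i_SD = p if none). Then i_SD ≤ i⋆ ≤ i_SU, and moreover β̂₁,…,β̂_{i⋆} are nonzero while β̂_{i⋆+1} = … = β̂_p = 0. -/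
/-!
At a minimizer the magnitudes `|β̂ᵢ|` are sorted like `|ỹᵢ|`: re-sorting `|β̂|` decreasingly and
giving it the signs of `ỹ` leaves `J_λ` unchanged and does not increase the loss (rearrangement
inequality), so by strict convexity of the objective it is `β̂` itself. On vectors with sorted
magnitudes `J_λ(b) = ∑ λᵢ |bᵢ|`, so against competitors with sorted magnitudes the objective
separates into the one-dimensional lasso objectives `½ (ỹᵢ - x)² + λᵢ |x|`. Zeroing every
coordinate from `i_SU` on is such a competitor, and it is strictly better unless those coordinates
already vanish: `i⋆ ≤ i_SU`. Raising the first zero coordinate `i` of `β̂` to a small `ε` with the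
sign of `ỹᵢ` is another, strictly better as soon as `|ỹᵢ| > λᵢ`: `i_SD ≤ i⋆`.
-/

open Finset Filter Topology

lemma IsLowerSet.mem_iff_lt_ncard {p : ℕ} {s : Set (Fin p)} (hs : IsLowerSet s) (i : Fin p) :
    i ∈ s ↔ (i : ℕ) < s.ncard := by
  rcases hs.eq_univ_or_Iio with rfl | ⟨a, rfl⟩
  · simp [Set.ncard_univ]
  · rw [Set.mem_Iio, Fin.lt_def, Set.ncard_eq_toFinset_card', Set.toFinset_Iio, Fin.card_Iio]

namespace Slope

variable {p : ℕ}

noncomputable def sortPerm (b : Fin p → ℝ) : Equiv.Perm (Fin p) :=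
  Fin.revPerm.trans (Tuple.sort fun j => |b j|)

lemma sortedAbs_eq_abs_sortPerm (b : Fin p → ℝ) (i : Fin p) :
    sortedAbs b i = |b (sortPerm b i)| := by
  simp [sortedAbs, sortPerm, Fin.revPerm]

lemma sortedAbs_antitone (b : Fin p → ℝ) : Antitone (sortedAbs b) :=
  fun _ _ hij => Tuple.monotone_sort (fun j => |b j|) (Fin.rev_le_rev.mpr hij)

lemma sortedAbs_eq_of_abs_eq_comp {b c : Fin p → ℝ} (π : Equiv.Perm (Fin p))
    (h : ∀ k, |b k| = |c (π k)|) : sortedAbs b = sortedAbs c := by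
  have hsorted : (fun k => |b k|) ∘ Tuple.sort (fun k => |b k|)
      = (fun k => |c k|) ∘ Tuple.sort (fun k => |c k|) := by
    rw [show (fun k => |b k|) = (fun k => |c k|) ∘ π from funext h]
    exact Tuple.comp_perm_comp_sort_eq_comp_sort
  exact funext fun i => congrFun hsorted i.rev

lemma sortedAbs_of_antitone {b : Fin p → ℝ} (hb : Antitone fun k => |b k|) :
    sortedAbs b = fun i => |b i| := by
  have hsorted : (fun k => |b k|) ∘ Fin.revPerm = (fun k => |b k|) ∘ Tuple.sort fun k => |b k| :=
    Tuple.comp_sort_eq_comp_iff_monotone.mpr fun _ _ hxy => hb (Fin.rev_le_rev.mpr hxy)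
  funext i
  simpa [sortedAbs, Fin.revPerm] using (congrFun hsorted i.rev).symm

lemma sum_mul_abs_comp_perm_le_sum_mul_sortedAbs {w : Fin p → ℝ} (hw : Antitone w)
    (b : Fin p → ℝ) (τ : Equiv.Perm (Fin p)) :
    ∑ i, w i * |b (τ i)| ≤ ∑ i, w i * sortedAbs b i := by
  have hcomp : ∀ i, sortedAbs b ((τ.trans (sortPerm b).symm) i) = |b (τ i)| := by
    simp [sortedAbs_eq_abs_sortPerm]
  simpa only [hcomp] using
    (hw.monovary (sortedAbs_antitone b)).sum_mul_comp_perm_le_sum_mul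
      (σ := τ.trans (sortPerm b).symm)

lemma sortedL1_eq_of_abs_eq_comp (lam : Fin p → ℝ) {b c : Fin p → ℝ} (π : Equiv.Perm (Fin p))
    (h : ∀ k, |b k| = |c (π k)|) : sortedL1 lam b = sortedL1 lam c := by
  rw [sortedL1, sortedL1, sortedAbs_eq_of_abs_eq_comp π h]

lemma sortedL1_of_antitone (lam : Fin p → ℝ) {b : Fin p → ℝ} (hb : Antitone fun k => |b k|) :
    sortedL1 lam b = ∑ i, lam i * |b i| := by
  rw [sortedL1, sortedAbs_of_antitone hb]

lemma sortedL1_midpoint_le {lam : Fin p → ℝ} (hlam : Antitone lam) (hlam0 : ∀ i, 0 ≤ lam i)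
    (b c : Fin p → ℝ) :
    sortedL1 lam (fun i => (b i + c i) / 2) ≤ (sortedL1 lam b + sortedL1 lam c) / 2 := by
  set m : Fin p → ℝ := fun i => (b i + c i) / 2
  set σ := sortPerm m
  calc sortedL1 lam m = ∑ i, lam i * |m (σ i)| := by
        simp only [sortedL1, sortedAbs_eq_abs_sortPerm, σ]
    _ ≤ ∑ i, (lam i * |b (σ i)| + lam i * |c (σ i)|) / 2 := by
        refine sum_le_sum fun i _ => ?_
        have := mul_le_mul_of_nonneg_left (abs_add_le (b (σ i)) (c (σ i))) (hlam0 i)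
        simp only [m, abs_div, abs_two]
        linarith
    _ = (∑ i, lam i * |b (σ i)| + ∑ i, lam i * |c (σ i)|) / 2 := by
        rw [← sum_add_distrib, sum_div]
    _ ≤ (sortedL1 lam b + sortedL1 lam c) / 2 := by
        gcongr
        · exact sum_mul_abs_comp_perm_le_sum_mul_sortedAbs hlam b σ
        · exact sum_mul_abs_comp_perm_le_sum_mul_sortedAbs hlam c σ

noncomputable def lassoObj (y l x : ℝ) : ℝ := 1 / 2 * (y - x) ^ 2 + l * |x|

noncomputable def slopeObj (lam y b : Fin p → ℝ) : ℝ :=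
  1 / 2 * ∑ i, (y i - b i) ^ 2 + sortedL1 lam b

noncomputable def signAligned (y a : ℝ) : ℝ := if y < 0 then -a else a

lemma abs_signAligned (y a : ℝ) : |signAligned y a| = |a| := by
  unfold signAligned; split_ifs <;> simp

lemma mul_signAligned (y a : ℝ) : y * signAligned y a = |y| * a := by
  unfold signAligned
  split_ifs with h
  · rw [abs_of_neg h]; ring
  · rw [abs_of_nonneg (not_lt.mp h)]

lemma lassoObj_zero_lt {y l x : ℝ} (hy : |y| ≤ l) (hx : x ≠ 0) :
    lassoObj y l 0 < lassoObj y l x := by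
  have hyx : y * x ≤ l * |x| :=
    (le_abs_self _).trans ((abs_mul y x).trans_le (mul_le_mul_of_nonneg_right hy (abs_nonneg x)))
  have hx2 : 0 < x ^ 2 := by positivity
  unfold lassoObj
  nlinarith

lemma lassoObj_signAligned_lt_zero {y l ε : ℝ} (hε : 0 < ε) (hεy : ε < 2 * (|y| - l)) :
    lassoObj y l (signAligned y ε) < lassoObj y l 0 := by
  have hsq : signAligned y ε ^ 2 = ε ^ 2 := by rw [← sq_abs, abs_signAligned, abs_of_pos hε]
  have hexpand : lassoObj y l (signAligned y ε) = lassoObj y l 0 + ε * (ε / 2 - (|y| - l)) := by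
    simp only [lassoObj, sub_sq, hsq, abs_signAligned, abs_of_pos hε]
    linear_combination -mul_signAligned y ε
  rw [hexpand]
  nlinarith

lemma slopeObj_of_antitone (lam y : Fin p → ℝ) {b : Fin p → ℝ} (hb : Antitone fun k => |b k|) :
    slopeObj lam y b = ∑ i, lassoObj (y i) (lam i) (b i) := by
  simp only [slopeObj, lassoObj, sortedL1_of_antitone lam hb, mul_sum, sum_add_distrib]

lemma slopeObj_lt_of_lassoObj {lam y b c : Fin p → ℝ} (hb : Antitone fun k => |b k|)
    (hc : Antitone fun k => |c k|)
    (hle : ∀ i, lassoObj (y i) (lam i) (b i) ≤ lassoObj (y i) (lam i) (c i))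
    (hlt : ∃ i, lassoObj (y i) (lam i) (b i) < lassoObj (y i) (lam i) (c i)) :
    slopeObj lam y b < slopeObj lam y c := by
  rw [slopeObj_of_antitone lam y hb, slopeObj_of_antitone lam y hc]
  obtain ⟨i, hi⟩ := hlt
  exact sum_lt_sum (fun i _ => hle i) ⟨i, mem_univ i, hi⟩

lemma eq_of_slopeObj_le {lam y β b : Fin p → ℝ} (hlam : Antitone lam) (hlam0 : ∀ i, 0 ≤ lam i)
    (hmin : ∀ c, slopeObj lam y β ≤ slopeObj lam y c) (hb : slopeObj lam y b ≤ slopeObj lam y β) :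
    b = β := by
  by_contra hne
  set m : Fin p → ℝ := fun i => (β i + b i) / 2
  have hloss : ∑ i, (y i - m i) ^ 2 =
      (∑ i, (y i - β i) ^ 2 + ∑ i, (y i - b i) ^ 2) / 2 - (∑ i, (β i - b i) ^ 2) / 4 := by
    rw [← sum_add_distrib, sum_div, sum_div, ← sum_sub_distrib]
    exact sum_congr rfl fun i _ => by ring
  have hdist : 0 < ∑ i, (β i - b i) ^ 2 := by
    obtain ⟨i, hi⟩ := Function.ne_iff.mp hne
    exact sum_pos' (fun _ _ => sq_nonneg _)
      ⟨i, mem_univ i, sq_pos_of_ne_zero (sub_ne_zero.mpr hi.symm)⟩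
  have hJ := sortedL1_midpoint_le hlam hlam0 β b
  have hm := hmin m
  unfold slopeObj at hb hm
  linarith

lemma sum_sub_sq_eq (y b : Fin p → ℝ) :
    ∑ i, (y i - b i) ^ 2 = ∑ i, y i ^ 2 - 2 * ∑ i, y i * b i + ∑ i, b i ^ 2 := by
  simp only [sub_sq, sum_add_distrib, sum_sub_distrib, mul_sum, mul_assoc]

lemma antitone_abs_of_min {lam y β : Fin p → ℝ} (hlam : Antitone lam) (hlam0 : ∀ i, 0 ≤ lam i)
    (hy : Antitone fun i => |y i|) (hmin : ∀ c, slopeObj lam y β ≤ slopeObj lam y c) :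
    Antitone fun i => |β i| := by
  set b : Fin p → ℝ := fun i => signAligned (y i) (sortedAbs β i)
  have habs_b : ∀ i, |b i| = sortedAbs β i := fun i => by
    simp only [b, abs_signAligned, sortedAbs, abs_abs]
  have hJ : sortedL1 lam b = sortedL1 lam β :=
    sortedL1_eq_of_abs_eq_comp lam (sortPerm β) fun i => by rw [habs_b, sortedAbs_eq_abs_sortPerm]
  have hsq : ∑ i, b i ^ 2 = ∑ i, β i ^ 2 := by
    calc ∑ i, b i ^ 2 = ∑ i, β (sortPerm β i) ^ 2 := by
          simp_rw [← sq_abs (b _), habs_b, sortedAbs_eq_abs_sortPerm, sq_abs]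
      _ = ∑ i, β i ^ 2 := Equiv.sum_comp (sortPerm β) fun i => β i ^ 2
  have hcross : ∑ i, y i * β i ≤ ∑ i, y i * b i :=
    calc ∑ i, y i * β i ≤ ∑ i, |y i| * |β i| :=
          sum_le_sum fun i _ => (le_abs_self _).trans (abs_mul _ _).le
      _ ≤ ∑ i, |y i| * sortedAbs β i := by
          simpa using sum_mul_abs_comp_perm_le_sum_mul_sortedAbs hy β 1
      _ = ∑ i, y i * b i := by simp only [b, mul_signAligned]
  have hb_eq : b = β := eq_of_slopeObj_le hlam hlam0 hmin <| by
    unfold slopeObj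
    rw [hJ, sum_sub_sq_eq, sum_sub_sq_eq, hsq]
    linarith
  intro i j hij
  show |β j| ≤ |β i|
  rw [← hb_eq, habs_b, habs_b]
  exact sortedAbs_antitone β hij

lemma eq_zero_of_min_of_abs_le {lam y β : Fin p → ℝ}
    (hmin : ∀ c, slopeObj lam y β ≤ slopeObj lam y c) (habs : Antitone fun i => |β i|)
    {m : ℕ} (hm : ∀ i : Fin p, m ≤ i → |y i| ≤ lam i) (i : Fin p) (hi : m ≤ i) : β i = 0 := by
  by_contra hβi
  set b : Fin p → ℝ := fun k => if (k : ℕ) < m then β k else 0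
  have hb : Antitone fun k => |b k| := by
    intro k l hkl
    simp only [b]
    split_ifs with hl hk
    · exact habs hkl
    · exact absurd (lt_of_le_of_lt (Fin.le_def.mp hkl) hl) hk
    all_goals simp
  refine (hmin b).not_gt (slopeObj_lt_of_lassoObj hb habs (fun k => ?_) ⟨i, ?_⟩)
  · simp only [b]
    split_ifs with hk
    · exact le_rfl
    · rcases eq_or_ne (β k) 0 with h | h
      · rw [h]
      · exact (lassoObj_zero_lt (hm k (not_lt.mp hk)) h).le
  · simp only [b, if_neg (not_lt.mpr hi)]
    exact lassoObj_zero_lt (hm i hi) hβi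

lemma abs_le_of_min_of_eq_zero {lam y β : Fin p → ℝ}
    (hmin : ∀ c, slopeObj lam y β ≤ slopeObj lam y c) (habs : Antitone fun i => |β i|)
    {i : Fin p} (hi : β i = 0) (hpre : ∀ k < i, β k ≠ 0) : |y i| ≤ lam i := by
  by_contra! hlt
  obtain ⟨ε, hεy, hεβ, hε⟩ : ∃ ε : ℝ, ε < 2 * (|y i| - lam i) ∧ (∀ k < i, ε ≤ |β k|) ∧ 0 < ε := by
    have hsmall : ∀ᶠ ε in 𝓝[>] (0 : ℝ), ε < 2 * (|y i| - lam i) :=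
      (eventually_lt_nhds (by linarith)).filter_mono nhdsWithin_le_nhds
    have hbelow : ∀ᶠ ε in 𝓝[>] (0 : ℝ), ∀ k < i, ε ≤ |β k| := by
      refine eventually_all.mpr fun k => ?_
      by_cases hk : k < i
      · exact ((eventually_lt_nhds (abs_pos.mpr (hpre k hk))).filter_mono
          nhdsWithin_le_nhds).mono fun ε h _ => h.le
      · exact Eventually.of_forall fun ε h => absurd h hk
    exact (hsmall.and (hbelow.and self_mem_nhdsWithin)).exists
  -- `ε` below every nonzero `|β k|` keeps the magnitudes of `b` sorted
  set b := Function.update β i (signAligned (y i) ε)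
  have hb : Antitone fun k => |b k| := by
    intro k l hkl
    simp only [b, Function.update_apply]
    split_ifs with hl hk hk
    · exact le_rfl
    · rw [abs_signAligned, abs_of_pos hε]
      exact hεβ k (lt_of_le_of_ne (hl ▸ hkl) hk)
    · calc |β l| ≤ |β i| := habs (hk ▸ hkl)
        _ = 0 := by rw [hi, abs_zero]
        _ ≤ _ := abs_nonneg _
    · exact habs hkl
  refine (hmin b).not_gt (slopeObj_lt_of_lassoObj hb habs (fun k => ?_) ⟨i, ?_⟩)
  · rcases eq_or_ne k i with rfl | hk
    · simpa [b, hi] using (lassoObj_signAligned_lt_zero hε hεy).le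
    · simp [b, hk]
  · simpa [b, hi] using lassoObj_signAligned_lt_zero hε hεy

end Slope

open Slope

theorem slope_bracketing_general {p : ℕ} (lam ytil : Fin p → ℝ)
    (hlam_mono : Antitone lam) (hlam_pos : ∀ i, 0 < lam i)
    (hy_sorted : Antitone fun i => |ytil i|)
    (βhat : Fin p → ℝ)
    (hmin : ∀ b : Fin p → ℝ,
      (1 / 2) * ∑ i, (ytil i - βhat i) ^ 2 + sortedL1 lam βhat ≤
      (1 / 2) * ∑ i, (ytil i - b i) ^ 2 + sortedL1 lam b)
    (istar : ℕ) (histar : istar = Set.ncard {i : Fin p | βhat i ≠ 0})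
    (iSU : ℕ)
    -- iSU is the largest (1-based) index i with |ỹ|₍ᵢ₎ > λᵢ, and 0 if there is none
    (hSU1 : ∀ i : Fin p, lam i < |ytil i| → (i : ℕ) + 1 ≤ iSU)
    (iSD : ℕ)
    -- iSD + 1 is the smallest (1-based) index i with |ỹ|₍ᵢ₎ ≤ λᵢ, and iSD = p if there is none
    (hSD1 : ∀ i : Fin p, (i : ℕ) < iSD → lam i < |ytil i|)
    (hSD2 : iSD = p ∨ ∃ i : Fin p, (i : ℕ) = iSD ∧ |ytil i| ≤ lam i) :
    iSD ≤ istar ∧ istar ≤ iSU ∧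
    (∀ i : Fin p, (i : ℕ) < istar → βhat i ≠ 0) ∧
    (∀ i : Fin p, istar ≤ (i : ℕ) → βhat i = 0) := by
  have habs : Antitone fun i => |βhat i| :=
    antitone_abs_of_min hlam_mono (fun i => (hlam_pos i).le) hy_sorted hmin
  have hsupp : ∀ i : Fin p, βhat i ≠ 0 ↔ (i : ℕ) < istar := fun i => by
    rw [histar]
    refine IsLowerSet.mem_iff_lt_ncard (s := {i | βhat i ≠ 0}) (fun j k hkj hj => ?_) i
    exact abs_pos.mp ((abs_pos.mpr hj).trans_le (habs hkj))
  have hzero : ∀ i : Fin p, istar ≤ (i : ℕ) → βhat i = 0 := fun i hi =>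
    not_not.mp fun h => ((hsupp i).mp h).not_ge hi
  refine ⟨?_, ?_, fun i => (hsupp i).mpr, hzero⟩
  · by_contra! hlt
    have hSD_le : iSD ≤ p := hSD2.elim le_of_eq fun ⟨i, hi, _⟩ => hi ▸ i.isLt.le
    let i : Fin p := ⟨istar, hlt.trans_le hSD_le⟩
    have hyi := abs_le_of_min_of_eq_zero hmin habs (hzero i le_rfl)
      fun k hk => (hsupp k).mpr hk
    exact (hSD1 i hlt).not_ge hyi
  · by_contra! hlt
    have histar_le : istar ≤ p := by
      simpa [histar] using Set.ncard_le_card {i : Fin p | βhat i ≠ 0}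
    let j : Fin p := ⟨istar - 1, by omega⟩
    refine (hsupp j).mpr (by simp only [j]; omega) ?_
    exact eq_zero_of_min_of_abs_le (m := iSU) hmin habs
      (fun k hk => not_lt.mp fun h => by have := hSU1 k h; omega) j (by simp only [j]; omega)

/-- bracketing of the number of SLOPE rejections between the
step-down and step-up indices (orthogonal design, sorted data). -/
theorem slope_bracketing {p : ℕ} (lam ytil : Fin p → ℝ)
    (hlam_mono : Antitone lam) (hlam_pos : ∀ i, 0 < lam i)
    (hy_sorted : Antitone fun i => |ytil i|)
    (βhat : Fin p → ℝ)
    (hmin : ∀ b : Fin p → ℝ,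
      (1 / 2) * ∑ i, (ytil i - βhat i) ^ 2 + sortedL1 lam βhat ≤
      (1 / 2) * ∑ i, (ytil i - b i) ^ 2 + sortedL1 lam b)
    (istar : ℕ) (histar : istar = Set.ncard {i : Fin p | βhat i ≠ 0})
    (iSU : ℕ)
    -- iSU is the largest (1-based) index i with |ỹ|₍ᵢ₎ > λᵢ, and 0 if there is none
    (hSU1 : ∀ i : Fin p, lam i < |ytil i| → (i : ℕ) + 1 ≤ iSU)
    (hSU2 : iSU = 0 ∨ ∃ i : Fin p, (i : ℕ) + 1 = iSU ∧ lam i < |ytil i|)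
    (iSD : ℕ)
    -- iSD + 1 is the smallest (1-based) index i with |ỹ|₍ᵢ₎ ≤ λᵢ, and iSD = p if there is none
    (hSD1 : ∀ i : Fin p, (i : ℕ) < iSD → lam i < |ytil i|)
    (hSD2 : iSD = p ∨ ∃ i : Fin p, (i : ℕ) = iSD ∧ |ytil i| ≤ lam i) :
    iSD ≤ istar ∧ istar ≤ iSU ∧
    (∀ i : Fin p, (i : ℕ) < istar → βhat i ≠ 0) ∧
    (∀ i : Fin p, istar ≤ (i : ℕ) → βhat i = 0) :=
  slope_bracketing_general lam ytil hlam_mono hlam_pos hy_sorted βhat hmin istar histar iSU hSU1 iSD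
    hSD1 hSD2
end
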